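/- arXiv:2304.11372 — 3 statements merged into one kernel-verified Lean document; each statement's English description precedes it below -/
import Mathlib

section
/- Let n, m ≥ 1, let Ω ⊆ ℝⁿ be open, and let u : Ω → ℝᵐ be Lebesgue measurable. Then the approximate jump set J_u of u is countably (n−1)-rectifiable: there exist countably many bounded sets E_i ⊆ ℝ^{n−1} and Lipschitz maps f_i : E_i → ℝⁿ such that J_u ⊆ ⋃_i f_i(E_i). -/
open MeasureTheory Filter Set Metric
open Bornology Module

noncomputable section

theorem graphLemma (n : ℕ) (ν₀ : EuclideanSpace ℝ (Fin n)) (hν₀ : ν₀ ≠ 0)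
    (S : Set (EuclideanSpace ℝ (Fin n)))
    (hS : ∀ x ∈ S, ∀ y ∈ S, |(inner ℝ (y - x) ν₀ : ℝ)| ≤ (5/9) * ‖ν₀‖ * ‖y - x‖) :
    ∃ (E : Set (EuclideanSpace ℝ (Fin (n - 1))))
      (f : EuclideanSpace ℝ (Fin (n - 1)) → EuclideanSpace ℝ (Fin n)),
      (IsBounded S → IsBounded E) ∧ LipschitzOnWith 2 f E ∧ S ⊆ f '' E := by
  classical
  have hdim : finrank ℝ ((ℝ ∙ ν₀)ᗮ : Submodule ℝ (EuclideanSpace ℝ (Fin n))) = n - 1 := by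
    have h1 := Submodule.finrank_add_finrank_orthogonal (𝕜 := ℝ) (ℝ ∙ ν₀)
    rw [finrank_span_singleton hν₀, finrank_euclideanSpace_fin] at h1
    omega
  set K := (ℝ ∙ ν₀)ᗮ with hK
  set nu1 : EuclideanSpace ℝ (Fin n) := ‖ν₀‖⁻¹ • ν₀ with hnu1
  have hν₀n : ‖ν₀‖ ≠ 0 := norm_ne_zero_iff.mpr hν₀
  have hnu1n : ‖nu1‖ = 1 := by
    rw [hnu1, norm_smul, norm_inv, norm_norm, inv_mul_cancel₀ hν₀n]
  set ψ : EuclideanSpace ℝ (Fin n) → EuclideanSpace ℝ (Fin n) :=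
    fun z => z - (inner ℝ z nu1 : ℝ) • nu1 with hψ
  have hψo : ∀ z, (inner ℝ (ψ z) nu1 : ℝ) = 0 := by
    intro z
    have : (inner ℝ nu1 nu1 : ℝ) = 1 := by
      rw [real_inner_self_eq_norm_sq, hnu1n]; norm_num
    rw [hψ]
    simp only [inner_sub_left, real_inner_smul_left, this, mul_one, sub_self]
  have hψK : ∀ z, ψ z ∈ K := by
    intro z
    rw [hK, Submodule.mem_orthogonal_singleton_iff_inner_right]
    have h := hψo z
    have : (inner ℝ ν₀ (ψ z) : ℝ) = ‖ν₀‖ * (inner ℝ nu1 (ψ z) : ℝ) := by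
      rw [hnu1]
      rw [real_inner_smul_left]
      field_simp
    rw [this, real_inner_comm, h, mul_zero]
  have hψsub : ∀ z₁ z₂, ψ z₁ - ψ z₂ = ψ (z₁ - z₂) := by
    intro z₁ z₂
    simp only [hψ, inner_sub_left, sub_smul]
    abel
  have hnorm : ∀ w : EuclideanSpace ℝ (Fin n),
      ‖w‖ ^ 2 = ‖ψ w‖ ^ 2 + (inner ℝ w nu1 : ℝ) ^ 2 := by
    intro w
    have hdecomp : w = ψ w + (inner ℝ w nu1 : ℝ) • nu1 := by simp [hψ]
    have horth : (inner ℝ (ψ w) ((inner ℝ w nu1 : ℝ) • nu1) : ℝ) = 0 := by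
      rw [real_inner_smul_right, hψo, mul_zero]
    calc ‖w‖ ^ 2 = ‖ψ w + (inner ℝ w nu1 : ℝ) • nu1‖ ^ 2 := by rw [← hdecomp]
      _ = ‖ψ w‖ ^ 2 + 2 * (inner ℝ (ψ w) ((inner ℝ w nu1 : ℝ) • nu1) : ℝ)
          + ‖(inner ℝ w nu1 : ℝ) • nu1‖ ^ 2 := norm_add_sq_real _ _
      _ = ‖ψ w‖ ^ 2 + (inner ℝ w nu1 : ℝ) ^ 2 := by
          rw [horth, norm_smul, hnu1n]
          simp [sq_abs]
  -- inverse Lipschitz on S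
  have hinv : ∀ x ∈ S, ∀ y ∈ S, ‖y - x‖ ≤ 2 * ‖ψ (y - x)‖ := by
    intro x hx y hy
    have h1 := hS x hx y hy
    have h2 : |(inner ℝ (y - x) nu1 : ℝ)| ≤ (5/9) * ‖y - x‖ := by
      rw [hnu1, real_inner_smul_right, abs_mul, abs_inv, abs_norm]
      rw [inv_mul_le_iff₀ (lt_of_le_of_ne (norm_nonneg _) (Ne.symm hν₀n))]
      calc |(inner ℝ (y - x) ν₀ : ℝ)| ≤ (5/9) * ‖ν₀‖ * ‖y - x‖ := h1
        _ = ‖ν₀‖ * ((5/9) * ‖y - x‖) := by ring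
    have h3 := hnorm (y - x)
    have h4 : (0:ℝ) ≤ ‖y - x‖ := norm_nonneg _
    have h5 : (0:ℝ) ≤ ‖ψ (y - x)‖ := norm_nonneg _
    nlinarith [abs_nonneg (inner ℝ (y - x) nu1 : ℝ), sq_abs (inner ℝ (y - x) nu1 : ℝ)]
  -- the chart
  set B : OrthonormalBasis (Fin (n - 1)) ℝ K :=
    (stdOrthonormalBasis ℝ K).reindex (finCongr hdim) with hB
  set φ : EuclideanSpace ℝ (Fin n) → EuclideanSpace ℝ (Fin (n - 1)) :=
    fun z => B.repr ⟨ψ z, hψK z⟩ with hφ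
  have hφdiff : ∀ z₁ z₂, ‖φ z₁ - φ z₂‖ = ‖ψ (z₁ - z₂)‖ := by
    intro z₁ z₂
    have : φ z₁ - φ z₂ = B.repr (⟨ψ z₁, hψK z₁⟩ - ⟨ψ z₂, hψK z₂⟩ : K) := by
      rw [map_sub]
    rw [this, LinearIsometryEquiv.norm_map]
    rw [← hψsub z₁ z₂]
    rfl
  have hφlip : LipschitzWith 1 φ := by
    apply LipschitzWith.of_dist_le_mul
    intro z₁ z₂
    rw [dist_eq_norm, dist_eq_norm, hφdiff, NNReal.coe_one, one_mul]
    have h := hnorm (z₁ - z₂)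
    nlinarith [norm_nonneg (ψ (z₁ - z₂)), norm_nonneg (z₁ - z₂),
      sq_nonneg (inner ℝ (z₁ - z₂) nu1 : ℝ)]
  refine ⟨φ '' S, Function.invFunOn φ S, fun h => hφlip.isBounded_image h, ?_, ?_⟩
  · rw [lipschitzOnWith_iff_dist_le_mul]
    rintro e₁ ⟨z₁, hz₁, rfl⟩ e₂ ⟨z₂, hz₂, rfl⟩
    have h₁m : Function.invFunOn φ S (φ z₁) ∈ S := Function.invFunOn_mem ⟨z₁, hz₁, rfl⟩
    have h₂m : Function.invFunOn φ S (φ z₂) ∈ S := Function.invFunOn_mem ⟨z₂, hz₂, rfl⟩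
    have h₁e : φ (Function.invFunOn φ S (φ z₁)) = φ z₁ := Function.invFunOn_eq ⟨z₁, hz₁, rfl⟩
    have h₂e : φ (Function.invFunOn φ S (φ z₂)) = φ z₂ := Function.invFunOn_eq ⟨z₂, hz₂, rfl⟩
    rw [dist_eq_norm, dist_eq_norm]
    calc ‖Function.invFunOn φ S (φ z₁) - Function.invFunOn φ S (φ z₂)‖
        ≤ 2 * ‖ψ (Function.invFunOn φ S (φ z₁) - Function.invFunOn φ S (φ z₂))‖ :=
          hinv _ h₂m _ h₁m
      _ = 2 * ‖φ (Function.invFunOn φ S (φ z₁)) - φ (Function.invFunOn φ S (φ z₂))‖ := by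
          rw [hφdiff]
      _ = (2:NNReal) * ‖φ z₁ - φ z₂‖ := by rw [h₁e, h₂e]; norm_num
  · intro x hx
    refine ⟨φ x, ⟨x, hx, rfl⟩, ?_⟩
    have hm : Function.invFunOn φ S (φ x) ∈ S := Function.invFunOn_mem ⟨x, hx, rfl⟩
    have he : φ (Function.invFunOn φ S (φ x)) = φ x := Function.invFunOn_eq ⟨x, hx, rfl⟩
    have := hinv _ hm x hx
    rw [← hφdiff, he, sub_self, norm_zero, mul_zero] at this
    have : x - Function.invFunOn φ S (φ x) = 0 := by
      rw [← norm_le_zero_iff]; exact this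
    have := sub_eq_zero.mp this
    exact this.symm



section claims

variable {n m : ℕ}

-- the distinguished constant
noncomputable def jumpC (n : ℕ) : ENNReal :=
  volume (ball (0 : EuclideanSpace ℝ (Fin n)) 1) * ENNReal.ofReal (1 / (2 * 40 ^ n))

-- the pieces
def jumpPiece (u : EuclideanSpace ℝ (Fin n) → EuclideanSpace ℝ (Fin m))
    (k : ℕ) (b : EuclideanSpace ℝ (Fin m)) (ν₀ : EuclideanSpace ℝ (Fin n)) (ρ : ℚ)
    (q : EuclideanSpace ℝ (Fin n)) : Set (EuclideanSpace ℝ (Fin n)) :=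
  {x | ∃ up um ν : _,
    ‖(ν : EuclideanSpace ℝ (Fin n))‖ = 1 ∧
    1 / ((k : ℝ) + 1) < ‖up - um‖ ∧
    ‖um - b‖ ≤ 1 / (100 * ((k : ℝ) + 1)) ∧
    ‖ν - ν₀‖ ≤ 1 / 10 ∧
    x ∈ ball q ((ρ : ℝ) / 10) ∧
    ∀ r : ℝ, 0 < r → r < (ρ : ℝ) →
      volume {z : EuclideanSpace ℝ (Fin n) |
          z ∈ ball x r ∧ 0 < (inner ℝ (z - x) ν : ℝ) ∧ 1 / (4 * ((k : ℝ) + 1)) < ‖u z - up‖}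
        ≤ jumpC n * ENNReal.ofReal (r ^ n) ∧
      volume {z : EuclideanSpace ℝ (Fin n) |
          z ∈ ball x r ∧ (inner ℝ (z - x) ν : ℝ) < 0 ∧ 1 / (4 * ((k : ℝ) + 1)) < ‖u z - um‖}
        ≤ jumpC n * ENNReal.ofReal (r ^ n)}

theorem jumpC_pos (n : ℕ) : 0 < jumpC n := by
  apply ENNReal.mul_pos
  · exact (measure_ball_pos volume 0 one_pos).ne'
  · simp only [ne_eq, ENNReal.ofReal_eq_zero, not_le]
    positivity

theorem coneLemma (hn : 1 ≤ n) (u : EuclideanSpace ℝ (Fin n) → EuclideanSpace ℝ (Fin m))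
    (k : ℕ) (b : EuclideanSpace ℝ (Fin m)) (ν₀ : EuclideanSpace ℝ (Fin n)) (ρ : ℚ)
    (q : EuclideanSpace ℝ (Fin n))
    {x y : EuclideanSpace ℝ (Fin n)}
    (hx : x ∈ jumpPiece u k b ν₀ ρ q) (hy : y ∈ jumpPiece u k b ν₀ ρ q) :
    (inner ℝ (y - x) ν₀ : ℝ) ≤ (1 / 2) * ‖y - x‖ := by
  classical
  by_contra hcon
  push_neg at hcon
  obtain ⟨upx, umx, νx, hνx1, hkx, hbx, hνx0, hqx, hrx⟩ := hx
  obtain ⟨upy, umy, νy, hνy1, hky, hby, hνy0, hqy, hry⟩ := hy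
  set d : ℝ := ‖y - x‖ with hd_def
  have hd : 0 < d := by
    rw [hd_def, norm_pos_iff]
    intro h0
    rw [h0] at hcon
    simp [hd_def, h0] at hcon
  have hρ : (0 : ℝ) < (ρ : ℝ) := by
    have := mem_ball.mp hqx
    have h0 := dist_nonneg (x := x) (y := q)
    linarith
  have hdρ : 2 * d < (ρ : ℝ) := by
    have h1 := mem_ball.mp hqx
    have h2 := mem_ball.mp hqy
    have : d ≤ dist y q + dist q x := by
      rw [hd_def, ← dist_eq_norm]
      exact dist_triangle y q x
    rw [dist_comm q x] at this
    linarith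
  -- inner ℝ products of y - x with νx, νy
  have key : ∀ ν : EuclideanSpace ℝ (Fin n), ‖ν - ν₀‖ ≤ 1 / 10 →
      2 * d / 5 ≤ (inner ℝ (y - x) ν : ℝ) := by
    intro ν hν
    have hsplit : (inner ℝ (y - x) ν : ℝ) = inner ℝ (y - x) ν₀ + inner ℝ (y - x) (ν - ν₀) := by
      rw [inner_sub_right]; ring
    have hcs : |(inner ℝ (y - x) (ν - ν₀) : ℝ)| ≤ d * (1 / 10) := by
      calc |(inner ℝ (y - x) (ν - ν₀) : ℝ)| ≤ ‖y - x‖ * ‖ν - ν₀‖ := abs_real_inner_le_norm _ _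
        _ ≤ d * (1 / 10) := by
            apply mul_le_mul_of_nonneg_left hν (norm_nonneg _)
    have := abs_le.mp hcs
    rw [hsplit]
    linarith
  set mid : EuclideanSpace ℝ (Fin n) := x + (2⁻¹ : ℝ) • (y - x) with hmid
  have hmidx : mid - x = (2⁻¹ : ℝ) • (y - x) := by rw [hmid]; abel
  have hmidy : mid - y = -((2⁻¹ : ℝ) • (y - x)) := by rw [hmid]; module
  have hmidxn : ‖mid - x‖ = 2⁻¹ * d := by
    rw [hmidx, norm_smul]; simp [hd_def]
  have hmidyn : ‖mid - y‖ = 2⁻¹ * d := by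
    rw [hmidy, norm_neg, norm_smul]; simp [hd_def]
  -- the bad sets
  set ε : ℝ := 1 / (4 * ((k : ℝ) + 1)) with hε
  set B1 : Set (EuclideanSpace ℝ (Fin n)) :=
    {z | z ∈ ball x (2 * d) ∧ 0 < (inner ℝ (z - x) νx : ℝ) ∧ ε < ‖u z - upx‖} with hB1
  set B2 : Set (EuclideanSpace ℝ (Fin n)) :=
    {z | z ∈ ball y (2 * d) ∧ (inner ℝ (z - y) νy : ℝ) < 0 ∧ ε < ‖u z - umy‖} with hB2
  have hvolB1 : volume B1 ≤ jumpC n * ENNReal.ofReal ((2 * d) ^ n) :=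
    (hrx (2 * d) (by linarith) hdρ).1
  have hvolB2 : volume B2 ≤ jumpC n * ENNReal.ofReal ((2 * d) ^ n) :=
    (hry (2 * d) (by linarith) hdρ).2
  set W : Set (EuclideanSpace ℝ (Fin n)) := ball mid (d / 10) with hW
  -- geometry: points of W are in the right half-balls
  have hWx : ∀ z ∈ W, z ∈ ball x (2 * d) ∧ 0 < (inner ℝ (z - x) νx : ℝ) := by
    intro z hz
    have hzmid : ‖z - mid‖ < d / 10 := by
      rw [← dist_eq_norm]; exact mem_ball.mp hz
    constructor
    · rw [mem_ball, dist_eq_norm]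
      calc ‖z - x‖ ≤ ‖z - mid‖ + ‖mid - x‖ := norm_sub_le_norm_sub_add_norm_sub z mid x
        _ < d / 10 + 2⁻¹ * d := by rw [hmidxn]; linarith
        _ < 2 * d := by linarith
    · have hsplit : (inner ℝ (z - x) νx : ℝ) = inner ℝ (mid - x) νx + inner ℝ (z - mid) νx := by
        rw [← inner_add_left]
        congr 1
        abel
      have h1 : (inner ℝ (mid - x) νx : ℝ) = 2⁻¹ * inner ℝ (y - x) νx := by
        rw [hmidx, real_inner_smul_left]
      have h2 : |(inner ℝ (z - mid) νx : ℝ)| ≤ ‖z - mid‖ := by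
        calc |(inner ℝ (z - mid) νx : ℝ)| ≤ ‖z - mid‖ * ‖νx‖ := abs_real_inner_le_norm _ _
          _ = ‖z - mid‖ := by rw [hνx1, mul_one]
      have h3 := key νx hνx0
      have := abs_le.mp h2
      rw [hsplit, h1]
      linarith
  have hWy : ∀ z ∈ W, z ∈ ball y (2 * d) ∧ (inner ℝ (z - y) νy : ℝ) < 0 := by
    intro z hz
    have hzmid : ‖z - mid‖ < d / 10 := by
      rw [← dist_eq_norm]; exact mem_ball.mp hz
    constructor
    · rw [mem_ball, dist_eq_norm]
      calc ‖z - y‖ ≤ ‖z - mid‖ + ‖mid - y‖ := norm_sub_le_norm_sub_add_norm_sub z mid y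
        _ < d / 10 + 2⁻¹ * d := by rw [hmidyn]; linarith
        _ < 2 * d := by linarith
    · have hsplit : (inner ℝ (z - y) νy : ℝ) = inner ℝ (mid - y) νy + inner ℝ (z - mid) νy := by
        rw [← inner_add_left]
        congr 1
        abel
      have h1 : (inner ℝ (mid - y) νy : ℝ) = -(2⁻¹ * inner ℝ (y - x) νy) := by
        rw [hmidy, inner_neg_left, real_inner_smul_left]
      have h2 : |(inner ℝ (z - mid) νy : ℝ)| ≤ ‖z - mid‖ := by
        calc |(inner ℝ (z - mid) νy : ℝ)| ≤ ‖z - mid‖ * ‖νy‖ := abs_real_inner_le_norm _ _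
          _ = ‖z - mid‖ := by rw [hνy1, mul_one]
      have h3 := key νy hνy0
      have := abs_le.mp h2
      rw [hsplit, h1]
      linarith
  -- W cannot be covered by B1 ∪ B2
  by_cases hWB : ∀ z ∈ W, z ∈ B1 ∨ z ∈ B2
  · -- measure contradiction
    haveI : Nonempty (Fin n) := Fin.pos_iff_nonempty.mp hn
    have hsub : W ⊆ B1 ∪ B2 := fun z hz => hWB z hz
    have hle : volume W ≤ volume B1 + volume B2 :=
      le_trans (measure_mono hsub) (measure_union_le _ _)
    have hvolW : volume W =
        ENNReal.ofReal ((d / 10) ^ n) * volume (ball (0 : EuclideanSpace ℝ (Fin n)) 1) := by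
      rw [hW, Measure.addHaar_ball volume mid (by positivity : (0:ℝ) ≤ d / 10),
        finrank_euclideanSpace_fin]
    set Vb := volume (ball (0 : EuclideanSpace ℝ (Fin n)) 1) with hVb
    have hVb0 : Vb ≠ 0 := (measure_ball_pos volume 0 one_pos).ne'
    have hVbt : Vb ≠ ⊤ := measure_ball_lt_top.ne
    have hsum : volume B1 + volume B2 ≤ Vb * ENNReal.ofReal ((d / 20) ^ n) := by
      calc volume B1 + volume B2
          ≤ jumpC n * ENNReal.ofReal ((2 * d) ^ n) + jumpC n * ENNReal.ofReal ((2 * d) ^ n) :=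
            add_le_add hvolB1 hvolB2
        _ = Vb * (ENNReal.ofReal (1 / (2 * 40 ^ n) * ((2 * d) ^ n)) +
              ENNReal.ofReal (1 / (2 * 40 ^ n) * ((2 * d) ^ n))) := by
            rw [jumpC, hVb, mul_assoc, ← ENNReal.ofReal_mul (by positivity), mul_add]
        _ = Vb * ENNReal.ofReal ((d / 20) ^ n) := by
            rw [← ENNReal.ofReal_add (by positivity) (by positivity)]
            congr 2
            have h40 : (40:ℝ) ^ n = 2 ^ n * 20 ^ n := by rw [← mul_pow]; norm_num
            rw [div_pow, mul_pow, h40]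
            field_simp
            ring
    have hlt : Vb * ENNReal.ofReal ((d / 20) ^ n) < ENNReal.ofReal ((d / 10) ^ n) * Vb := by
      rw [mul_comm (ENNReal.ofReal ((d / 10) ^ n)) Vb]
      rw [ENNReal.mul_lt_mul_iff_right hVb0 hVbt]
      rw [ENNReal.ofReal_lt_ofReal_iff (by positivity)]
      apply pow_lt_pow_left₀ _ (by positivity) (by omega)
      linarith
    have := lt_irrefl (volume W) (lt_of_le_of_lt (le_trans hle hsum) (lt_of_lt_of_le hlt (le_of_eq hvolW.symm)))
    exact this
  · push_neg at hWB
    obtain ⟨z, hzW, hzB1, hzB2⟩ := hWB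
    have hx' := hWx z hzW
    have hy' := hWy z hzW
    have hz1 : ‖u z - upx‖ ≤ ε := by
      by_contra hc
      push_neg at hc
      exact hzB1 ⟨hx'.1, hx'.2, hc⟩
    have hz2 : ‖u z - umy‖ ≤ ε := by
      by_contra hc
      push_neg at hc
      exact hzB2 ⟨hy'.1, hy'.2, hc⟩
    -- norm contradiction
    have hK : (0 : ℝ) < (k : ℝ) + 1 := by positivity
    have t1 : ‖upx - umy‖ ≤ 2 * ε := by
      have : upx - umy = -(u z - upx) + (u z - umy) := by abel
      rw [this]
      calc ‖-(u z - upx) + (u z - umy)‖ ≤ ‖-(u z - upx)‖ + ‖u z - umy‖ := norm_add_le _ _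
        _ ≤ 2 * ε := by rw [norm_neg]; linarith
    have t2 : ‖upx - umx‖ ≤ ‖upx - umy‖ + ‖umy - b‖ + ‖umx - b‖ := by
      have h : upx - umx = (upx - umy) + ((umy - b) + -(umx - b)) := by abel
      rw [h]
      calc ‖(upx - umy) + ((umy - b) + -(umx - b))‖
          ≤ ‖upx - umy‖ + ‖(umy - b) + -(umx - b)‖ := norm_add_le _ _
        _ ≤ ‖upx - umy‖ + (‖umy - b‖ + ‖-(umx - b)‖) := by
            gcongr
            exact norm_add_le _ _
        _ = ‖upx - umy‖ + ‖umy - b‖ + ‖umx - b‖ := by rw [norm_neg]; ring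
    have hεval : 2 * ε = 1 / (2 * ((k : ℝ) + 1)) := by
      rw [hε]; field_simp; ring
    have t3 : 1 / ((k : ℝ) + 1) < 1 / (2 * ((k : ℝ) + 1)) + 1 / (100 * ((k : ℝ) + 1)) +
        1 / (100 * ((k : ℝ) + 1)) := by
      calc 1 / ((k : ℝ) + 1) < ‖upx - umx‖ := hkx
        _ ≤ ‖upx - umy‖ + ‖umy - b‖ + ‖umx - b‖ := t2
        _ ≤ 1 / (2 * ((k : ℝ) + 1)) + 1 / (100 * ((k : ℝ) + 1)) + 1 / (100 * ((k : ℝ) + 1)) := by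
            rw [← hεval]
            exact add_le_add (add_le_add t1 hby) hbx
    have e1 : 1 / (2 * ((k : ℝ) + 1)) = (1 / 2) * (1 / ((k : ℝ) + 1)) := by
      rw [one_div, mul_inv]; ring
    have e2 : 1 / (100 * ((k : ℝ) + 1)) = (1 / 100) * (1 / ((k : ℝ) + 1)) := by
      rw [one_div, mul_inv]; ring
    rw [e1, e2] at t3
    have h1K : (0:ℝ) < 1 / ((k : ℝ) + 1) := by positivity
    linarith

end claims

end

/-- The approximate jump set of a measurable function is countably `(n-1)`-rectifiable. -/
theorem stmt_0 (n m : ℕ) (hn : 1 ≤ n) (hm : 1 ≤ m)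
    (Ω : Set (EuclideanSpace ℝ (Fin n))) (hΩ : IsOpen Ω)
    (u : EuclideanSpace ℝ (Fin n) → EuclideanSpace ℝ (Fin m)) (hu : Measurable u)
    (J : Set (EuclideanSpace ℝ (Fin n)))
    (hJ : J = {x : EuclideanSpace ℝ (Fin n) | x ∈ Ω ∧
      ∃ (up um : EuclideanSpace ℝ (Fin m)) (ν : EuclideanSpace ℝ (Fin n)),
        up ≠ um ∧ ‖ν‖ = 1 ∧
        (∀ ε : ℝ, 0 < ε → Tendsto
          (fun r : ℝ => volume {z : EuclideanSpace ℝ (Fin n) |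
              z ∈ ball x r ∧ 0 < (inner ℝ (z - x) ν : ℝ) ∧ ε < ‖u z - up‖} / ENNReal.ofReal (r ^ n))
          (nhdsWithin 0 (Ioi 0)) (nhds 0)) ∧
        (∀ ε : ℝ, 0 < ε → Tendsto
          (fun r : ℝ => volume {z : EuclideanSpace ℝ (Fin n) |
              z ∈ ball x r ∧ (inner ℝ (z - x) ν : ℝ) < 0 ∧ ε < ‖u z - um‖} / ENNReal.ofReal (r ^ n))
          (nhdsWithin 0 (Ioi 0)) (nhds 0))}) :
    ∃ (E : ℕ → Set (EuclideanSpace ℝ (Fin (n - 1))))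
      (f : ℕ → (EuclideanSpace ℝ (Fin (n - 1)) → EuclideanSpace ℝ (Fin n))),
      (∀ i, Bornology.IsBounded (E i)) ∧
      (∀ i, ∃ K : NNReal, LipschitzOnWith K (f i) (E i)) ∧
      J ⊆ ⋃ i, f i '' E i := by

  classical
  obtain ⟨Dm, hDmc, hDmd⟩ := TopologicalSpace.exists_countable_dense (EuclideanSpace ℝ (Fin m))
  obtain ⟨Dn, hDnc, hDnd⟩ := TopologicalSpace.exists_countable_dense (EuclideanSpace ℝ (Fin n))
  haveI := hDmc.to_subtype
  haveI := hDnc.to_subtype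
  haveI : Nonempty Dm := hDmd.nonempty.to_subtype
  haveI : Nonempty Dn := hDnd.nonempty.to_subtype
  haveI : Nonempty {ρ : ℚ // 0 < ρ} := ⟨⟨1, one_pos⟩⟩
  set T : ℕ × Dm × Dn × {ρ : ℚ // 0 < ρ} × Dn → Set (EuclideanSpace ℝ (Fin n)) :=
    fun i => jumpPiece u i.1 i.2.1 i.2.2.1 i.2.2.2.1 i.2.2.2.2 with hT
  -- each piece is contained in a Lipschitz image of a bounded set
  have main : ∀ i, ∃ (E : Set (EuclideanSpace ℝ (Fin (n - 1))))
      (f : EuclideanSpace ℝ (Fin (n - 1)) → EuclideanSpace ℝ (Fin n)),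
      IsBounded E ∧ LipschitzOnWith 2 f E ∧ T i ⊆ f '' E := by
    rintro ⟨k, b, ν₀, ρ, q⟩
    rcases eq_empty_or_nonempty (T ⟨k, b, ν₀, ρ, q⟩) with he | ⟨x₀, hx₀⟩
    · exact ⟨∅, fun _ => 0, isBounded_empty, lipschitzOnWith_empty _ _,
        by rw [he, image_empty]⟩
    · obtain ⟨up₀, um₀, ν', hν'1, -, -, hνclose, -, -⟩ := hx₀
      have hν₀lb : (9 : ℝ) / 10 ≤ ‖(ν₀ : EuclideanSpace ℝ (Fin n))‖ := by
        have h1 := norm_sub_norm_le ν' (ν₀ : EuclideanSpace ℝ (Fin n))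
        rw [hν'1] at h1
        linarith [le_trans h1 hνclose]
      have hν₀ne : (ν₀ : EuclideanSpace ℝ (Fin n)) ≠ 0 := by
        intro h0
        rw [h0, norm_zero] at hν₀lb
        linarith
      have hcone : ∀ x ∈ T ⟨k, b, ν₀, ρ, q⟩, ∀ y ∈ T ⟨k, b, ν₀, ρ, q⟩,
          |(inner ℝ (y - x) (ν₀ : EuclideanSpace ℝ (Fin n)) : ℝ)| ≤
            (5 / 9) * ‖(ν₀ : EuclideanSpace ℝ (Fin n))‖ * ‖y - x‖ := by
        intro x hx y hy
        have hpl := coneLemma hn u k b ν₀ (ρ : ℚ) q hx hy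
        have hmi := coneLemma hn u k b ν₀ (ρ : ℚ) q hy hx
        have hxy : (x : EuclideanSpace ℝ (Fin n)) - y = -(y - x) := by abel
        rw [hxy, inner_neg_left, norm_neg] at hmi
        have habs : |(inner ℝ (y - x) (ν₀ : EuclideanSpace ℝ (Fin n)) : ℝ)| ≤
            (1 / 2) * ‖y - x‖ := abs_le.mpr ⟨by linarith, hpl⟩
        nlinarith [norm_nonneg ((y : EuclideanSpace ℝ (Fin n)) - x),
          abs_nonneg (inner ℝ (y - x) (ν₀ : EuclideanSpace ℝ (Fin n)) : ℝ)]
      obtain ⟨E, f, hEb, hlip, hsub⟩ :=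
        graphLemma n (ν₀ : EuclideanSpace ℝ (Fin n)) hν₀ne (T ⟨k, b, ν₀, ρ, q⟩) hcone
      have hTb : IsBounded (T ⟨k, b, ν₀, ρ, q⟩) := by
        apply (isBounded_ball (x := (q : EuclideanSpace ℝ (Fin n))) (r := (ρ : ℝ) / 10)).subset
        rintro x ⟨-, -, -, -, -, -, -, hq, -⟩
        exact hq
      exact ⟨E, f, hEb hTb, hlip, hsub⟩
  -- cover of J by pieces
  have hcover : ∀ x ∈ J, ∃ i, x ∈ T i := by
    intro x hx
    rw [hJ] at hx
    obtain ⟨-, up, um, ν, hne, hν, hpl, hmi⟩ := hx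
    have hpos : 0 < ‖up - um‖ := norm_pos_iff.mpr (sub_ne_zero.mpr hne)
    obtain ⟨k, hk⟩ := exists_nat_one_div_lt hpos
    have hεpos : (0 : ℝ) < 1 / (4 * ((k : ℝ) + 1)) := by positivity
    have h1 := (hpl _ hεpos).eventually_lt_const (jumpC_pos n)
    have h2 := (hmi _ hεpos).eventually_lt_const (jumpC_pos n)
    have h12 := h1.and h2
    rw [eventually_nhdsWithin_iff, Metric.eventually_nhds_iff] at h12
    obtain ⟨δ, hδ, hδ'⟩ := h12
    obtain ⟨ρ, hρ1, hρ2⟩ := exists_rat_btwn hδ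
    have hρpos : (0 : ℚ) < ρ := by exact_mod_cast hρ1
    have hρposR : (0 : ℝ) < (ρ : ℝ) := by exact_mod_cast hρ1
    obtain ⟨b, hbD, hbd⟩ := hDmd.exists_dist_lt um (by positivity :
      (0:ℝ) < 1 / (100 * ((k : ℝ) + 1)))
    obtain ⟨ν₀, hνD, hνd⟩ := hDnd.exists_dist_lt ν (by norm_num : (0:ℝ) < 1/10)
    obtain ⟨q, hqD, hqd⟩ := hDnd.exists_dist_lt x (by positivity : (0:ℝ) < (ρ : ℝ) / 10)
    refine ⟨⟨k, ⟨b, hbD⟩, ⟨ν₀, hνD⟩, ⟨ρ, hρpos⟩, ⟨q, hqD⟩⟩, up, um, ν, hν, hk, ?_, ?_, ?_, ?_⟩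
    · rw [← dist_eq_norm]; exact hbd.le
    · rw [← dist_eq_norm]; exact hνd.le
    · exact mem_ball.mpr hqd
    · intro r hr hrρ
      have hdist : dist r 0 < δ := by
        rw [Real.dist_0_eq_abs, abs_of_pos hr]
        linarith
      obtain ⟨hv1, hv2⟩ := hδ' hdist hr
      have h0 : ENNReal.ofReal (r ^ n) ≠ 0 := by
        simp only [ne_eq, ENNReal.ofReal_eq_zero, not_le]
        positivity
      have ht : ENNReal.ofReal (r ^ n) ≠ ⊤ := ENNReal.ofReal_ne_top
      constructor
      · exact ((ENNReal.div_lt_iff (Or.inl h0) (Or.inl ht)).mp hv1).le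
      · exact ((ENNReal.div_lt_iff (Or.inl h0) (Or.inl ht)).mp hv2).le
  choose E f hEb hlip hsub using main
  obtain ⟨g, hg⟩ := exists_surjective_nat (ℕ × Dm × Dn × {ρ : ℚ // 0 < ρ} × Dn)
  refine ⟨fun j => E (g j), fun j => f (g j), fun j => hEb (g j),
    fun j => ⟨2, hlip (g j)⟩, ?_⟩
  intro x hx
  obtain ⟨i, hi⟩ := hcover x hx
  obtain ⟨j, rfl⟩ := hg i
  exact mem_iUnion.mpr ⟨j, hsub _ hi⟩
end

section
/- Let K ⊆ ℝⁿ be a Lebesgue-null set (ℒⁿ(K) = 0). Then there exist vectors v₁, …, vₙ ∈ ℝⁿ forming a basis of ℝⁿ over ℝ such that q₁v₁ + ⋯ + qₙvₙ ∉ K for every (q₁, …, qₙ) ∈ ℚⁿ ∖ {0}. In particular, the ℚ-linear span X of {v₁, …, vₙ} is a countable dense ℚ-vector subspace of ℝⁿ with (X ∖ {0}) ∩ K = ∅. -/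
open MeasureTheory Set

section aux
variable {n : ℕ}

local notation "E" => EuclideanSpace ℝ (Fin n)

/-- The shear map replacing the `j`-th coordinate by `∑ c i • v i`. -/
noncomputable def shearMap (c : Fin n → ℚ) (j : Fin n) : (Fin n → E) →ₗ[ℝ] (Fin n → E) where
  toFun v := Function.update v j (∑ i, (c i : ℝ) • v i)
  map_add' v w := by
    funext i
    rcases eq_or_ne i j with rfl | h
    · simp [Finset.sum_add_distrib, smul_add]
    · simp [Function.update_of_ne h]
  map_smul' a v := by
    funext i
    rcases eq_or_ne i j with rfl | h
    · simp only [Function.update_self, Pi.smul_apply, RingHom.id_apply, Finset.smul_sum]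
      exact Finset.sum_congr rfl fun k _ => (smul_comm a ((c k : ℝ)) (v k)).symm
    · simp [Function.update_of_ne h]

lemma shearMap_inj (c : Fin n → ℚ) (j : Fin n) (hj : c j ≠ 0) :
    Function.Injective (shearMap c j) := by
  rw [← LinearMap.ker_eq_bot, LinearMap.ker_eq_bot']
  intro v hv
  have h1 : ∀ i, i ≠ j → v i = 0 := by
    intro i hi
    have := congrFun hv i
    simpa [shearMap, Function.update_of_ne hi] using this
  have h2 : (∑ i, (c i : ℝ) • v i) = 0 := by
    have := congrFun hv j
    simpa [shearMap] using this
  have h3 : (c j : ℝ) • v j = 0 := by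
    have hs : (∑ i, (c i : ℝ) • v i) = (c j : ℝ) • v j :=
      Finset.sum_eq_single j (fun i _ hi => by rw [h1 i hi, smul_zero])
        (fun h => absurd (Finset.mem_univ j) h)
    rw [← hs]; exact h2
  have h4 : v j = 0 := by
    have : (c j : ℝ) ≠ 0 := by exact_mod_cast hj
    exact (smul_eq_zero.1 h3).resolve_left this
  funext i
  rcases eq_or_ne i j with rfl | h
  · exact h4
  · exact h1 i h

end aux

/-- Given a Lebesgue-null set `K ⊆ ℝⁿ`, there is a basis of `ℝⁿ` whose nonzero rational linear
combinations all avoid `K`; its `ℚ`-span is a countable dense `ℚ`-subspace avoiding `K∖{0}`. -/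
theorem stmt_4 (n : ℕ) (hn : 1 ≤ n)
    (K : Set (EuclideanSpace ℝ (Fin n))) (hK : volume K = 0) :
    ∃ v : Fin n → EuclideanSpace ℝ (Fin n),
      LinearIndependent ℝ v ∧ Submodule.span ℝ (Set.range v) = ⊤ ∧
      (∀ c : Fin n → ℚ, c ≠ 0 → (∑ i, (c i : ℝ) • v i) ∉ K) ∧
      Set.Countable {x : EuclideanSpace ℝ (Fin n) | ∃ c : Fin n → ℚ, x = ∑ i, (c i : ℝ) • v i} ∧
      Dense {x : EuclideanSpace ℝ (Fin n) | ∃ c : Fin n → ℚ, x = ∑ i, (c i : ℝ) • v i} ∧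
      ({x : EuclideanSpace ℝ (Fin n) | ∃ c : Fin n → ℚ, x = ∑ i, (c i : ℝ) • v i} \ {0}) ∩ K = ∅ := by
  -- replace K by a measurable superset of measure zero
  set K' : Set (EuclideanSpace ℝ (Fin n)) := toMeasurable volume K with hK'def
  have hKK' : K ⊆ K' := subset_toMeasurable _ _
  have hK'0 : volume K' = 0 := by rwa [measure_toMeasurable]
  -- the bad set
  set Bad : Set (Fin n → EuclideanSpace ℝ (Fin n)) :=
    ⋃ c : {c : Fin n → ℚ // c ≠ 0}, {v | (∑ i, ((c : Fin n → ℚ) i : ℝ) • v i) ∈ K'} with hBad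
  haveI : Measure.IsAddHaarMeasure (volume : Measure (Fin n → EuclideanSpace ℝ (Fin n))) :=
    Measure.pi.isAddHaarMeasure _
  have hBadNull : volume Bad = 0 := by
    refine measure_iUnion_null fun ⟨c, hc⟩ => ?_
    obtain ⟨j, hj⟩ := Function.ne_iff.1 hc
    have hinj := shearMap_inj c j hj
    have hsurj : Function.Surjective (shearMap c j) :=
      (LinearMap.injective_iff_surjective).1 hinj
    let φ : (Fin n → EuclideanSpace ℝ (Fin n)) ≃ₗ[ℝ] (Fin n → EuclideanSpace ℝ (Fin n)) := LinearEquiv.ofBijective (shearMap c j) ⟨hinj, hsurj⟩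
    have hset : {v : Fin n → EuclideanSpace ℝ (Fin n) | (∑ i, (c i : ℝ) • v i) ∈ K'}
        = φ ⁻¹' ((fun w : Fin n → EuclideanSpace ℝ (Fin n) => w j) ⁻¹' K') := by
      ext v
      simp [φ, shearMap]
    rw [hset, Measure.addHaar_preimage_linearEquiv]
    have h0 : volume ((fun w : Fin n → EuclideanSpace ℝ (Fin n) => w j) ⁻¹' K') = 0 :=
      Measure.pi_eval_preimage_null (fun _ : Fin n => (volume : Measure (EuclideanSpace ℝ (Fin n)))) hK'0
    rw [h0, mul_zero]
  -- the set of linearly independent tuples is open and nonempty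
  have hU : IsOpen {v : Fin n → EuclideanSpace ℝ (Fin n) | LinearIndependent ℝ v} := isOpen_setOf_linearIndependent
  have hUne : ((PiLp.basisFun 2 ℝ (Fin n)) : Fin n → EuclideanSpace ℝ (Fin n)) ∈ {v : Fin n → EuclideanSpace ℝ (Fin n) | LinearIndependent ℝ v} :=
    (PiLp.basisFun 2 ℝ (Fin n)).linearIndependent
  have hUpos : 0 < volume {v : Fin n → EuclideanSpace ℝ (Fin n) | LinearIndependent ℝ v} :=
    hU.measure_pos volume ⟨_, hUne⟩
  -- pick a good tuple
  have hex : ∃ v, v ∈ {v : Fin n → EuclideanSpace ℝ (Fin n) | LinearIndependent ℝ v} \ Bad := by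
    by_contra h
    push_neg at h
    have hsub : {v : Fin n → EuclideanSpace ℝ (Fin n) | LinearIndependent ℝ v} ⊆ Bad := by
      intro v hv
      by_contra hvB
      exact (h v) ⟨hv, hvB⟩
    exact hUpos.ne' (le_antisymm ((measure_mono hsub).trans hBadNull.le) zero_le)
  obtain ⟨v, hvLI, hvBad⟩ := hex
  have havoid : ∀ c : Fin n → ℚ, c ≠ 0 → (∑ i, (c i : ℝ) • v i) ∉ K' := by
    intro c hc hmem
    exact hvBad (Set.mem_iUnion.2 ⟨⟨c, hc⟩, hmem⟩)
  have havoidK : ∀ c : Fin n → ℚ, c ≠ 0 → (∑ i, (c i : ℝ) • v i) ∉ K :=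
    fun c hc hm => havoid c hc (hKK' hm)
  -- span is top
  have hcard : Fintype.card (Fin n) = Module.finrank ℝ (EuclideanSpace ℝ (Fin n)) := by
    simp [finrank_euclideanSpace_fin]
  have hspan : Submodule.span ℝ (Set.range v) = ⊤ := by
    haveI : Nonempty (Fin n) := ⟨⟨0, hn⟩⟩
    exact hvLI.span_eq_top_of_card_eq_finrank hcard
  -- the rational span set
  set S : Set (EuclideanSpace ℝ (Fin n)) := {x : EuclideanSpace ℝ (Fin n) | ∃ c : Fin n → ℚ, x = ∑ i, (c i : ℝ) • v i} with hS
  have hSrange : S = Set.range (fun c : Fin n → ℚ => ∑ i, (c i : ℝ) • v i) := by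
    ext x; simp [hS, eq_comm]
  have hScount : S.Countable := by
    rw [hSrange]; exact Set.countable_range _
  -- density
  have hdense : Dense S := by
    let b : Module.Basis (Fin n) ℝ (EuclideanSpace ℝ (Fin n)) := Module.Basis.mk hvLI hspan.ge
    have hb : ∀ i, b i = v i := fun i => Module.Basis.mk_apply hvLI hspan.ge i
    have hfact : (fun c : Fin n → ℚ => ∑ i, (c i : ℝ) • v i)
        = (b.equivFunL.symm : (Fin n → ℝ) → EuclideanSpace ℝ (Fin n)) ∘ (fun c : Fin n → ℚ => fun i => (c i : ℝ)) := by
      funext c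
      simp only [Function.comp]
      rw [show ((b.equivFunL.symm : (Fin n → ℝ) → EuclideanSpace ℝ (Fin n)) (fun i => (c i : ℝ)))
          = b.equivFun.symm (fun i => (c i : ℝ)) from rfl, Module.Basis.equivFun_symm_apply]
      simp [hb]
    rw [hSrange, hfact]
    refine DenseRange.comp ?_ ?_ (b.equivFunL.symm).continuous
    · exact (b.equivFunL.symm).surjective.denseRange
    · have hr : Set.range (fun c : Fin n → ℚ => fun i : Fin n => (c i : ℝ))
          = Set.pi Set.univ (fun _ => Set.range ((↑) : ℚ → ℝ)) := by
        ext y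
        constructor
        · rintro ⟨c, rfl⟩ i _
          exact ⟨c i, rfl⟩
        · intro hy
          choose c hc using fun i => hy i (Set.mem_univ i)
          exact ⟨c, funext hc⟩
      rw [DenseRange, hr]
      exact dense_pi Set.univ (fun i _ => Rat.denseRange_cast)
  -- intersection empty
  have hinter : (S \ {0}) ∩ K = ∅ := by
    ext x
    simp only [Set.mem_inter_iff, Set.mem_diff, Set.mem_singleton_iff, Set.mem_empty_iff_false,
      iff_false, not_and, and_imp]
    rintro ⟨c, rfl⟩ hx0 hxK
    have hc : c ≠ 0 := by
      rintro rfl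
      exact hx0 (by simp)
    exact havoidK c hc hxK
  exact ⟨v, hvLI, hspan, havoidK, hScount, hdense, hinter⟩
end

section
/- Let x ∈ ℝⁿ and let A, B be symmetric real n×n matrices. If lim_{r→0⁺} r^{−n} ∫_{B_r(x)} min( |A(z − x)·(z − x) − B(z − x)·(z − x)| / |z − x|² , 1 ) dz = 0, then A = B. (Uniqueness of the approximate symmetric gradient: two symmetric matrices inducing the same approximate second-order expansion of the tangential increment at a point coincide.) -/
open MeasureTheory Filter Set Metric

namespace Stmt7Aux

variable {n : ℕ}

noncomputable def Qf (C : Matrix (Fin n) (Fin n) ℝ) (w : EuclideanSpace ℝ (Fin n)) : ℝ :=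
  ∑ i, ∑ j, C i j * w i * w j

noncomputable def ff (C : Matrix (Fin n) (Fin n) ℝ) (w : EuclideanSpace ℝ (Fin n)) : ℝ :=
  min (|Qf C w| / ‖w‖ ^ 2) 1

lemma Qf_smul (C : Matrix (Fin n) (Fin n) ℝ) (r : ℝ) (w : EuclideanSpace ℝ (Fin n)) :
    Qf C (r • w) = r ^ 2 * Qf C w := by
  simp only [Qf, PiLp.smul_apply, smul_eq_mul, Finset.mul_sum]
  exact Finset.sum_congr rfl fun i _ => Finset.sum_congr rfl fun j _ => by ring

lemma ff_smul (C : Matrix (Fin n) (Fin n) ℝ) {r : ℝ} (hr : 0 < r) (w : EuclideanSpace ℝ (Fin n)) :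
    ff C (r • w) = ff C w := by
  have h2 : (0:ℝ) < r ^ 2 := by positivity
  rw [ff, ff, Qf_smul, abs_mul, abs_of_pos h2, norm_smul, Real.norm_eq_abs, abs_of_pos hr,
    mul_pow, mul_div_mul_left _ _ h2.ne']

lemma Qf_continuous (C : Matrix (Fin n) (Fin n) ℝ) : Continuous (Qf C) := by
  unfold Qf
  fun_prop

lemma ff_nonneg (C : Matrix (Fin n) (Fin n) ℝ) (w : EuclideanSpace ℝ (Fin n)) : 0 ≤ ff C w :=
  le_min (div_nonneg (abs_nonneg _) (by positivity)) zero_le_one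

lemma ff_measurable (C : Matrix (Fin n) (Fin n) ℝ) : Measurable (ff C) :=
  (((Qf_continuous C).abs.measurable).div ((continuous_norm.pow 2).measurable)).min measurable_const

end Stmt7Aux

open Stmt7Aux

/-- Uniqueness of the approximate symmetric gradient: two symmetric matrices inducing the same
approximate second-order expansion at a point coincide. -/
theorem stmt_7 (n : ℕ) (hn : 1 ≤ n) (x : EuclideanSpace ℝ (Fin n))
    (A B : Matrix (Fin n) (Fin n) ℝ) (hA : A.IsSymm) (hB : B.IsSymm)
    (h : Tendsto (fun r : ℝ => (1 / r ^ n) * ∫ z in ball x r,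
        min (|(∑ i, ∑ j, A i j * (z - x) i * (z - x) j) -
              (∑ i, ∑ j, B i j * (z - x) i * (z - x) j)| / ‖z - x‖ ^ 2) 1)
      (nhdsWithin 0 (Ioi 0)) (nhds 0)) :
    A = B := by
  classical
  set C : Matrix (Fin n) (Fin n) ℝ := A - B with hCdef
  -- rewrite the integrand
  have hsum : ∀ w : EuclideanSpace ℝ (Fin n),
      (∑ i, ∑ j, A i j * w i * w j) - (∑ i, ∑ j, B i j * w i * w j) = Qf C w := by
    intro w
    rw [Qf, ← Finset.sum_sub_distrib]
    refine Finset.sum_congr rfl fun i _ => ?_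
    rw [← Finset.sum_sub_distrib]
    refine Finset.sum_congr rfl fun j _ => ?_
    simp only [hCdef, Matrix.sub_apply]
    ring
  have hfun : (fun r : ℝ => (1 / r ^ n) * ∫ z in ball x r,
        min (|(∑ i, ∑ j, A i j * (z - x) i * (z - x) j) -
              (∑ i, ∑ j, B i j * (z - x) i * (z - x) j)| / ‖z - x‖ ^ 2) 1)
      = fun r : ℝ => (1 / r ^ n) * ∫ z in ball x r, ff C (z - x) := by
    funext r
    congr 1
    refine integral_congr_ae (ae_of_all _ fun z => ?_)
    simp only [ff]
    rw [hsum]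
  rw [hfun] at h
  set I : ℝ := ∫ w in ball (0 : EuclideanSpace ℝ (Fin n)) 1, ff C w with hIdef
  -- scaling identity
  have key : ∀ r : ℝ, 0 < r → (∫ z in ball x r, ff C (z - x)) = r ^ n * I := by
    intro r hr
    have h1 : (∫ z in ball x r, ff C (z - x)) =
        ∫ w in ball (0 : EuclideanSpace ℝ (Fin n)) r, ff C w := by
      rw [← integral_indicator measurableSet_ball, ← integral_indicator measurableSet_ball]
      have hind : ∀ z : EuclideanSpace ℝ (Fin n),
          (ball x r).indicator (fun z => ff C (z - x)) z
            = (ball (0 : EuclideanSpace ℝ (Fin n)) r).indicator (ff C) (z - x) := by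
        intro z
        by_cases hz : z ∈ ball x r
        · rw [indicator_of_mem hz, indicator_of_mem]
          rw [mem_ball_iff_norm] at hz
          simpa [mem_ball_iff_norm] using hz
        · rw [indicator_of_notMem hz, indicator_of_notMem]
          rw [mem_ball_iff_norm] at hz
          simpa [mem_ball_iff_norm] using hz
      simp_rw [hind]
      exact integral_sub_right_eq_self ((ball (0 : EuclideanSpace ℝ (Fin n)) r).indicator (ff C)) x
    rw [h1]
    have h2 := Measure.setIntegral_comp_smul_of_pos volume (ff C)
      (ball (0 : EuclideanSpace ℝ (Fin n)) 1) hr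
    rw [smul_unitBall_of_pos hr, finrank_euclideanSpace_fin] at h2
    have h3 : (∫ w in ball (0 : EuclideanSpace ℝ (Fin n)) 1, ff C (r • w)) = I :=
      integral_congr_ae (ae_of_all _ fun w => ff_smul C hr w)
    rw [h3, smul_eq_mul] at h2
    rw [← inv_mul_eq_iff_eq_mul₀ (pow_ne_zero n hr.ne')]
    exact h2.symm
  -- the function is eventually constant, hence I = 0
  have hconst : (fun r : ℝ => (1 / r ^ n) * ∫ z in ball x r, ff C (z - x))
      =ᶠ[nhdsWithin (0:ℝ) (Ioi 0)] fun _ => I := by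
    filter_upwards [self_mem_nhdsWithin] with r hr
    rw [key r hr, one_div, inv_mul_cancel_left₀ (pow_ne_zero n (ne_of_gt hr))]
  have hI : I = 0 := tendsto_nhds_unique tendsto_const_nhds (h.congr' hconst)
  -- integrability and a.e. vanishing
  have hInt : IntegrableOn (ff C) (ball (0 : EuclideanSpace ℝ (Fin n)) 1) := by
    refine Integrable.mono' (g := fun _ => (1:ℝ)) (integrableOn_const measure_ball_lt_top.ne)
      (ff_measurable C).aestronglyMeasurable (ae_of_all _ fun w => ?_)
    rw [Real.norm_eq_abs, abs_of_nonneg (ff_nonneg C w)]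
    exact min_le_right _ _
  have hae : ff C =ᵐ[volume.restrict (ball (0 : EuclideanSpace ℝ (Fin n)) 1)] 0 :=
    (integral_eq_zero_iff_of_nonneg (fun w => ff_nonneg C w) hInt).1 hI
  -- the quadratic form vanishes
  have Qall : ∀ v : EuclideanSpace ℝ (Fin n), Qf C v = 0 := by
    intro v
    by_contra hQv
    have hv : v ≠ 0 := by
      rintro rfl
      simp [Qf] at hQv
    have hvn : (0:ℝ) < ‖v‖ := norm_pos_iff.2 hv
    have hupos : (0:ℝ) < (2 * ‖v‖)⁻¹ := by positivity
    set u : EuclideanSpace ℝ (Fin n) := (2 * ‖v‖)⁻¹ • v with hu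
    have hfu : ff C u = ff C v := ff_smul C hupos v
    have hfv : 0 < ff C v :=
      lt_min (div_pos (abs_pos.2 hQv) (by positivity)) one_pos
    have h0u : 0 < ff C u := hfu ▸ hfv
    have hunorm : ‖u‖ = 2⁻¹ := by
      rw [hu, norm_smul, Real.norm_eq_abs, abs_of_pos hupos]
      field_simp
    have humem : u ∈ ball (0 : EuclideanSpace ℝ (Fin n)) 1 := by
      rw [mem_ball, dist_zero_right, hunorm]
      norm_num
    have hcont : ContinuousAt (ff C) u := by
      have hdiv : ContinuousAt (fun w : EuclideanSpace ℝ (Fin n) => |Qf C w| / ‖w‖ ^ 2) u := by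
        refine ContinuousAt.div ((Qf_continuous C).abs.continuousAt) (by fun_prop) ?_
        rw [hunorm]
        norm_num
      exact hdiv.min continuousAt_const
    have hmem : {w : EuclideanSpace ℝ (Fin n) | 0 < ff C w}
        ∩ ball (0 : EuclideanSpace ℝ (Fin n)) 1 ∈ nhds u :=
      Filter.inter_mem (hcont (Ioi_mem_nhds h0u)) (isOpen_ball.mem_nhds humem)
    obtain ⟨ε, hε, hball⟩ := Metric.mem_nhds_iff.1 hmem
    have hzero : volume ({w : EuclideanSpace ℝ (Fin n) | ff C w ≠ 0}
        ∩ ball (0 : EuclideanSpace ℝ (Fin n)) 1) = 0 := by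
      have := ae_iff.1 hae
      rwa [Measure.restrict_apply (by
        exact (ff_measurable C) (measurableSet_singleton (0:ℝ)) |>.compl)] at this
    have hsub : ball u ε ⊆ {w : EuclideanSpace ℝ (Fin n) | ff C w ≠ 0}
        ∩ ball (0 : EuclideanSpace ℝ (Fin n)) 1 := by
      intro w hw
      rcases hball hw with ⟨hw1, hw2⟩
      exact ⟨ne_of_gt hw1, hw2⟩
    have := measure_mono (μ := (volume : Measure (EuclideanSpace ℝ (Fin n)))) hsub
    rw [hzero] at this
    exact (measure_ball_pos volume u hε).ne' (le_antisymm this bot_le)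
  -- conclude C = 0
  have hCsymm : C.IsSymm := hA.sub hB
  have hC0 : C = 0 := by
    ext i j
    have h1 := Qall (EuclideanSpace.single i 1 + EuclideanSpace.single j 1)
    have h2 := Qall (EuclideanSpace.single i 1)
    have h3 := Qall (EuclideanSpace.single j 1)
    by_cases hij : i = j
    · subst hij
      simp only [Qf, EuclideanSpace.single_apply, mul_ite, ite_mul, mul_one, one_mul,
        mul_zero, zero_mul, Finset.sum_ite_eq, Finset.sum_ite_eq', Finset.mem_univ,
        if_true] at h2
      simpa using h2
    · simp only [Qf, PiLp.add_apply, EuclideanSpace.single_apply, mul_add, add_mul, mul_ite,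
        ite_mul, mul_one, one_mul, mul_zero, zero_mul, Finset.sum_add_distrib,
        Finset.sum_ite_eq, Finset.sum_ite_eq', Finset.mem_univ, if_true] at h1 h2 h3
      have hs : C j i = C i j := hCsymm.apply i j
      simp only [Matrix.zero_apply]
      rw [hs] at h1
      linarith
  rw [hCdef, sub_eq_zero] at hC0
  exact hC0
end
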